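/- arXiv:2009.05594 — 3 statements merged into one kernel-verified Lean document; each statement's English description precedes it below -/
import Mathlib

section
/- Let f : ℝ → ℝ be bounded and regulated, and satisfy the no-jamming condition. Define f⁺(y) = max{f(y),0} and f⁻(y) = min{f(y),0}, and let R⁻ = {x ∈ ℝ : ∫_{x−ε}^{x} 1/f⁻(y) dy > −∞ for some ε > 0} and R⁺ = {x ∈ ℝ : ∫_{x}^{x+ε} 1/f⁺(y) dy < +∞ for some ε > 0}. Then the set Ω* = R⁻ ∩ R⁺ consists of isolated points: every x ∈ Ω* has a neighborhood containing no other point of Ω*. Consequently Ω* is at most countable. -/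
open MeasureTheory Set Filter

/-- `f` is regulated with left limits `fl` and right limits `fr`. -/
def Regulated (f fl fr : ℝ → ℝ) : Prop :=
  ∀ y : ℝ,
    Filter.Tendsto f (nhdsWithin y (Set.Iio y)) (nhds (fl y)) ∧
    Filter.Tendsto f (nhdsWithin y (Set.Ioi y)) (nhds (fr y))

/-- The no-jamming condition: if `f(y−)·f(y+) = 0` or `f(y−) > 0 > f(y+)`, then `f(y) = 0`. -/
def NoJamming (f fl fr : ℝ → ℝ) : Prop :=
  ∀ y : ℝ, (fl y * fr y = 0 ∨ (0 < fl y ∧ fr y < 0)) → f y = 0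

/-- The set `R⁻` of points from which a strictly decreasing solution can start:
`∫_{x−ε}^{x} 1/f⁻(y) dy > −∞` for some `ε > 0`, where `1/f⁻ = −∞` on `{f⁻ = 0}`. -/
def Rminus (f : ℝ → ℝ) : Set ℝ :=
  {x : ℝ | ∃ ε : ℝ, 0 < ε ∧
    ∫⁻ y in Set.Ico (x - ε) x, (ENNReal.ofReal (max (-(f y)) 0))⁻¹ < ⊤}

/-- The set `R⁺` of points from which a strictly increasing solution can start:
`∫_{x}^{x+ε} 1/f⁺(y) dy < +∞` for some `ε > 0`, where `1/f⁺ = +∞` on `{f⁺ = 0}`. -/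
def Rplus (f : ℝ → ℝ) : Set ℝ :=
  {x : ℝ | ∃ ε : ℝ, 0 < ε ∧
    ∫⁻ y in Set.Ioc x (x + ε), (ENNReal.ofReal (max (f y) 0))⁻¹ < ⊤}

/-!
A regulated function is continuous off a countable set (near any point its one-sided limits stay
close to each other), hence measurable. Finiteness of `∫ 1/f⁺` on an interval forces `f > 0`
almost everywhere there, and finiteness of `∫ 1/f⁻` forces `f < 0`; so the right interval
witnessing `x ∈ R⁺` and the left interval witnessing `y ∈ R⁻` cannot overlap. Hence a point of
`R⁺` has no point of `R⁻` just to its right, a point of `R⁻` has no point of `R⁺` just to its left,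
and `Ω*` is discrete, hence countable.
-/

open Topology

theorem countable_of_forall_eventually_notMem_nhdsNE {X : Type*} [TopologicalSpace X]
    [HereditarilyLindelofSpace X] {s : Set X} (h : ∀ x ∈ s, ∀ᶠ y in 𝓝[≠] x, y ∉ s) :
    s.Countable :=
  (HereditarilyLindelofSpace.isLindelof s).countable_of_isDiscrete <|
    isDiscrete_iff_nhdsNE.2 fun x hx => inf_principal_eq_bot.2 (h x hx)

def totalJump (f fl fr : ℝ → ℝ) (y : ℝ) : ℝ := dist (f y) (fl y) + dist (f y) (fr y)

theorem totalJump_nonneg (f fl fr : ℝ → ℝ) (y : ℝ) : 0 ≤ totalJump f fl fr y := by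
  unfold totalJump; positivity

namespace Regulated

variable {f fl fr : ℝ → ℝ} (hreg : Regulated f fl fr)
include hreg

theorem dist_lim_le {z L c : ℝ} (hf : ∀ᶠ w in 𝓝 z, dist (f w) L ≤ c) :
    dist (fl z) L ≤ c ∧ dist (fr z) L ≤ c :=
  ⟨le_of_tendsto ((hreg z).1.dist tendsto_const_nhds) (nhdsWithin_le_nhds hf),
    le_of_tendsto ((hreg z).2.dist tendsto_const_nhds) (nhdsWithin_le_nhds hf)⟩

theorem totalJump_le {z L c : ℝ} (hf : ∀ᶠ w in 𝓝 z, dist (f w) L ≤ c) :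
    totalJump f fl fr z ≤ 4 * c := by
  obtain ⟨hl, hr⟩ := hreg.dist_lim_le hf
  have hz : dist (f z) L ≤ c := hf.self_of_nhds
  unfold totalJump
  linarith [dist_triangle_right (f z) (fl z) L, dist_triangle_right (f z) (fr z) L]

theorem eventually_totalJump_le {s : Set ℝ} (hs : IsOpen s) {a L c : ℝ}
    (hf : ∀ᶠ w in 𝓝[s] a, dist (f w) L ≤ c) :
    ∀ᶠ z in 𝓝[s] a, totalJump f fl fr z ≤ 4 * c := by
  filter_upwards [eventually_eventually_nhdsWithin.2 hf, self_mem_nhdsWithin] with z hz hzs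
  exact hreg.totalJump_le (hs.nhdsWithin_eq hzs ▸ hz)

theorem tendsto_totalJump_nhdsNE (y : ℝ) :
    Tendsto (totalJump f fl fr) (𝓝[≠] y) (𝓝 0) := by
  refine tendsto_order.2 ⟨fun a ha => Eventually.of_forall fun z =>
    ha.trans_le (totalJump_nonneg f fl fr z), fun ε hε => ?_⟩
  have hc : 0 < ε / 8 := by positivity
  have hlt : 4 * (ε / 8) < ε := by linarith
  rw [← nhdsLT_sup_nhdsGT, eventually_sup]
  exact ⟨(hreg.eventually_totalJump_le isOpen_Iio
      ((hreg y).1 (Metric.closedBall_mem_nhds _ hc))).mono fun z hz => hz.trans_lt hlt,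
    (hreg.eventually_totalJump_le isOpen_Ioi
      ((hreg y).2 (Metric.closedBall_mem_nhds _ hc))).mono fun z hz => hz.trans_lt hlt⟩

theorem continuousAt_of_totalJump_eq_zero {y : ℝ} (hy : totalJump f fl fr y = 0) :
    ContinuousAt f y := by
  obtain ⟨hl, hr⟩ := (add_eq_zero_iff_of_nonneg dist_nonneg dist_nonneg).1 hy
  rw [dist_eq_zero] at hl hr
  rw [continuousAt_iff_continuous_left'_right', ContinuousWithinAt, ContinuousWithinAt]
  exact ⟨hl ▸ (hreg y).1, hr ▸ (hreg y).2⟩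

theorem countable_setOf_totalJump_ne_zero : {y | totalJump f fl fr y ≠ 0}.Countable := by
  have hsub : {y | totalJump f fl fr y ≠ 0} ⊆
      ⋃ n : ℕ, {y | 1 / (n + 1 : ℝ) < totalJump f fl fr y} := fun y hy =>
    mem_iUnion.2 <| exists_nat_one_div_lt <| (totalJump_nonneg f fl fr y).lt_of_ne' hy
  refine Countable.mono hsub <| countable_iUnion fun n =>
    countable_of_forall_eventually_notMem_nhdsNE fun y _ => ?_
  exact ((hreg.tendsto_totalJump_nhdsNE y).eventually (gt_mem_nhds (by positivity))).mono
    fun z hz => hz.not_gt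

theorem aemeasurable : AEMeasurable f volume := by
  have hD := hreg.countable_setOf_totalJump_ne_zero
  have hcont : ContinuousOn f {y | totalJump f fl fr y ≠ 0}ᶜ := fun y hy =>
    (hreg.continuousAt_of_totalJump_eq_zero (not_not.1 hy)).continuousWithinAt
  have hae := hcont.aemeasurable (μ := volume) hD.measurableSet.compl
  rwa [Measure.restrict_congr_set (ae_eq_univ.2 (by simpa using hD.measure_zero volume)),
    Measure.restrict_univ] at hae

end Regulated

theorem ae_pos_of_lintegral_inv_lt_top {α : Type*} [MeasurableSpace α] {μ : Measure α}
    {g : α → ℝ} (hg : AEMeasurable g μ)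
    (h : ∫⁻ y, (ENNReal.ofReal (max (g y) 0))⁻¹ ∂μ < ⊤) : ∀ᵐ y ∂μ, 0 < g y := by
  filter_upwards [ae_lt_top' (hg.max aemeasurable_const).ennreal_ofReal.inv h.ne] with y hy
  simpa [ENNReal.inv_lt_top] using hy

theorem lintegral_inv_neg_eq_top_of_lintegral_inv_lt_top {α : Type*} [MeasurableSpace α]
    {μ : Measure α} (hμ : μ ≠ 0) {g : α → ℝ} (hg : AEMeasurable g μ)
    (h : ∫⁻ y, (ENNReal.ofReal (max (g y) 0))⁻¹ ∂μ < ⊤) :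
    ∫⁻ y, (ENNReal.ofReal (max (-(g y)) 0))⁻¹ ∂μ = ⊤ := by
  by_contra hfin
  have : (ae μ).NeBot := ae_neBot.2 hμ
  obtain ⟨y, hpos, hneg⟩ := ((ae_pos_of_lintegral_inv_lt_top hg h).and
    (ae_pos_of_lintegral_inv_lt_top hg.neg (lt_top_iff_ne_top.2 hfin))).exists
  exact (neg_pos.1 hneg).not_gt hpos

theorem lintegral_inv_neg_Ico_eq_top {f : ℝ → ℝ} (hf : AEMeasurable f volume)
    {p q ε δ : ℝ} (hε : 0 < ε) (hδ : 0 < δ) (hpq : p < q) (hqp : q - δ < p + ε)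
    (hplus : ∫⁻ y in Ioc p (p + ε), (ENNReal.ofReal (max (f y) 0))⁻¹ < ⊤) :
    ∫⁻ y in Ico (q - δ) q, (ENNReal.ofReal (max (-(f y)) 0))⁻¹ = ⊤ := by
  set I := Ioc p (p + ε) ∩ Ico (q - δ) q
  have hI : volume I ≠ 0 := by
    have hsub : Ioo (max p (q - δ)) (min (p + ε) q) ⊆ I := fun y hy =>
      ⟨⟨(le_max_left _ _).trans_lt hy.1, hy.2.le.trans (min_le_left _ _)⟩,
        ⟨(le_max_right _ _).trans hy.1.le, hy.2.trans_le (min_le_right _ _)⟩⟩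
    refine (lt_of_lt_of_le ?_ (measure_mono hsub)).ne'
    rw [Real.volume_Ioo, ENNReal.ofReal_pos, sub_pos]
    exact max_lt (lt_min (by linarith) hpq) (lt_min hqp (by linarith))
  have htop := lintegral_inv_neg_eq_top_of_lintegral_inv_lt_top
    (Measure.restrict_eq_zero.not.2 hI) hf.restrict
    ((lintegral_mono_set inter_subset_left).trans_lt hplus)
  exact top_unique (htop ▸ lintegral_mono_set inter_subset_right)

section Omega

variable {f : ℝ → ℝ} (hf : AEMeasurable f volume)
include hf

theorem eventually_nhdsGT_notMem_Rminus {p : ℝ} (hp : p ∈ Rplus f) :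
    ∀ᶠ q in 𝓝[>] p, q ∉ Rminus f := by
  obtain ⟨ε, hε, hplus⟩ := hp
  filter_upwards [Ioo_mem_nhdsGT (lt_add_of_pos_right p hε)] with q hq ⟨δ, hδ, hminus⟩
  exact hminus.ne (lintegral_inv_neg_Ico_eq_top hf hε hδ hq.1 (by linarith [hq.2]) hplus)

theorem eventually_nhdsLT_notMem_Rplus {q : ℝ} (hq : q ∈ Rminus f) :
    ∀ᶠ p in 𝓝[<] q, p ∉ Rplus f := by
  obtain ⟨δ, hδ, hminus⟩ := hq
  filter_upwards [Ioo_mem_nhdsLT (sub_lt_self q hδ)] with p hp ⟨ε, hε, hplus⟩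
  exact hminus.ne (lintegral_inv_neg_Ico_eq_top hf hε hδ hp.2 (by linarith [hp.1]) hplus)

theorem eventually_nhdsNE_notMem_Rminus_inter_Rplus {x : ℝ} (hx : x ∈ Rminus f ∩ Rplus f) :
    ∀ᶠ y in 𝓝[≠] x, y ∉ Rminus f ∩ Rplus f := by
  rw [← nhdsLT_sup_nhdsGT, eventually_sup]
  exact ⟨(eventually_nhdsLT_notMem_Rplus hf hx.1).mono fun y hy h => hy h.2,
    (eventually_nhdsGT_notMem_Rminus hf hx.2).mono fun y hy h => hy h.1⟩

end Omega

theorem omega_star_isolated_and_countable_general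
    (f : ℝ → ℝ)
    (fl fr : ℝ → ℝ) (hreg : Regulated f fl fr) :
    (∀ x ∈ Rminus f ∩ Rplus f, ∃ ε : ℝ, 0 < ε ∧
      ∀ y ∈ Set.Ioo (x - ε) (x + ε), y ∈ Rminus f ∩ Rplus f → y = x) ∧
    (Rminus f ∩ Rplus f).Countable := by
  have hiso := fun x (hx : x ∈ Rminus f ∩ Rplus f) =>
    eventually_nhdsNE_notMem_Rminus_inter_Rplus hreg.aemeasurable hx
  refine ⟨fun x hx => ?_, countable_of_forall_eventually_notMem_nhdsNE hiso⟩
  obtain ⟨ε, hε, hball⟩ :=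
    Metric.eventually_nhds_iff.1 (eventually_nhdsWithin_iff.1 (hiso x hx))
  refine ⟨ε, hε, fun y hy hyS => by_contra fun hyx => hball ?_ hyx hyS⟩
  rwa [← Metric.mem_ball, Real.ball_eq_Ioo]

/-- The set `Ω* = R⁻ ∩ R⁺` consists of isolated points, and hence is countable. -/
theorem omega_star_isolated_and_countable
    (f : ℝ → ℝ) (M : ℝ) (hb : ∀ y : ℝ, |f y| ≤ M)
    (fl fr : ℝ → ℝ) (hreg : Regulated f fl fr) (hnj : NoJamming f fl fr) :
    (∀ x ∈ Rminus f ∩ Rplus f, ∃ ε : ℝ, 0 < ε ∧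
      ∀ y ∈ Set.Ioo (x - ε) (x + ε), y ∈ Rminus f ∩ Rplus f → y = x) ∧
    (Rminus f ∩ Rplus f).Countable :=
  omega_star_isolated_and_countable_general f fl fr hreg
end

section
/- Let f : ℝ → ℝ be bounded and regulated, and satisfy the no-jamming condition. Let x : [0,τ] → ℝ be a strictly increasing Carathéodory solution of ẋ = f(x), x(0) = x₀. Then for every t ∈ [0,τ] one has the identity t = ∫_{x₀}^{x(t)} 1/f(y) dy + Leb({s ∈ [0,t] : f(x(s)) = 0}), where Leb denotes Lebesgue measure on the time axis and the first integral is the Lebesgue integral of 1/f over the set where f ≠ 0 in [x₀, x(t)]. -/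
/-!
Since `f` is bounded, the solution is Lipschitz, and by Lebesgue's differentiation theorem
`ẋ = f ∘ x` on a measurable set `S` of full measure in `[0, t]`. Changing variables `y = x s` on `S`
turns `∫_{x(S)} 1/f` into `∫_S ẋ / f(x) = Leb {s ∈ S | f (x s) ≠ 0}`, and `x(S)` has full measure
in `[x₀, x t]` because a Lipschitz map sends null sets to null sets.
-/

open MeasureTheory Set Filter

open scoped NNReal

theorem LipschitzOnWith.volume_image_eq_zero {x : ℝ → ℝ} {K : ℝ≥0} {T N : Set ℝ}
    (hx : LipschitzOnWith K x T) (hNT : N ⊆ T) (hN : volume N = 0) : volume (x '' N) = 0 := by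
  have := (hx.mono hNT).hausdorffMeasure_image_le zero_le_one
  rw [hausdorffMeasure_real, hN, mul_zero] at this
  exact nonpos_iff_eq_zero.1 this

theorem LipschitzOnWith.image_ae_eq_image {x : ℝ → ℝ} {K : ℝ≥0} {S T : Set ℝ}
    (hx : LipschitzOnWith K x T) (hST : S ⊆ T) (h : S =ᵐ[volume] T) :
    x '' S =ᵐ[volume] x '' T := by
  refine ae_eq_set.2 ⟨by rw [sdiff_eq_empty.2 (image_mono hST), measure_empty], ?_⟩
  have himage : x '' T \ x '' S ⊆ x '' (T \ S) := by
    rintro _ ⟨⟨s, hs, rfl⟩, hsS⟩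
    exact ⟨s, ⟨hs, fun h => hsS ⟨s, h, rfl⟩⟩, rfl⟩
  exact measure_mono_null himage (hx.volume_image_eq_zero sdiff_subset (ae_eq_set.1 h).2)

theorem exists_measurableSet_subset_ae_eq_forall_mem {α : Type*} [MeasurableSpace α]
    {μ : Measure α} {T : Set α} {p : α → Prop} (hT : MeasurableSet T) (h : ∀ᵐ a ∂μ, a ∈ T → p a) :
    ∃ S ⊆ T, MeasurableSet S ∧ S =ᵐ[μ] T ∧ ∀ a ∈ S, p a := by
  have hPT : {a | a ∈ T ∧ p a} =ᵐ[μ] T := by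
    filter_upwards [h] with a ha
    exact propext ⟨And.left, fun haT => ⟨haT, ha haT⟩⟩
  obtain ⟨S, hSP, hS, hSP_ae⟩ :=
    (hT.nullMeasurableSet.congr hPT.symm).exists_measurable_subset_ae_eq
  exact ⟨S, fun a ha => (hSP ha).1, hS, hSP_ae.trans hPT, fun a ha => (hSP ha).2⟩

theorem integral_inv_image_add_measureReal_eq {x φ : ℝ → ℝ} {S : Set ℝ} (hS : MeasurableSet S)
    (hS_fin : volume S ≠ ⊤) (hx : ∀ s ∈ S, HasDerivAt x (φ (x s)) s) (hmono : MonotoneOn x S) :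
    (∫ y in x '' S, (φ y)⁻¹) + volume.real {s ∈ S | φ (x s) = 0} = volume.real S := by
  -- `deriv x` agrees with `φ ∘ x` on `S` and, unlike it, is known to be measurable.
  set A := {s | deriv x s = 0}
  have hA : MeasurableSet A := measurable_deriv x (measurableSet_singleton 0)
  have hderiv : ∀ s ∈ S, deriv x s = φ (x s) := fun s hs => (hx s hs).deriv
  have hzero : {s ∈ S | φ (x s) = 0} = S ∩ A := by
    ext s
    exact and_congr_right fun hs => by rw [mem_ofPred_eq, hderiv s hs]
  have hquot : EqOn (fun s => φ (x s) • (φ (x s))⁻¹) (Aᶜ.indicator fun _ => 1) S := by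
    intro s hs
    by_cases h : φ (x s) = 0
    · have hsA : s ∈ A := (hderiv s hs).trans h
      simp [h, hsA]
    · have hsA : s ∉ A := fun hsA => h ((hderiv s hs).symm.trans hsA)
      simp [h, hsA]
  rw [integral_image_eq_integral_deriv_smul_of_monotoneOn hS
      (fun s hs => (hx s hs).hasDerivWithinAt) hmono, setIntegral_congr_fun hS hquot,
    setIntegral_indicator hA.compl, hzero, setIntegral_const, smul_eq_mul, mul_one,
    ← sdiff_eq, measureReal_sdiff_add_inter hA hS_fin]

theorem sub_eq_integral_inv_add_measureReal_of_lipschitzOnWith {x φ : ℝ → ℝ} {K : ℝ≥0}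
    {a b : ℝ} (hab : a ≤ b) (hlip : LipschitzOnWith K x (Icc a b))
    (hmono : MonotoneOn x (Icc a b)) (hx : ∀ᵐ s, s ∈ Icc a b → HasDerivAt x (φ (x s)) s) :
    b - a = (∫ y in Icc (x a) (x b), (φ y)⁻¹) + volume.real {s ∈ Icc a b | φ (x s) = 0} := by
  obtain ⟨S, hST, hS, hS_ae, hxS⟩ :=
    exists_measurableSet_subset_ae_eq_forall_mem measurableSet_Icc hx
  have himage : x '' S =ᵐ[volume] Icc (x a) (x b) := by
    rw [← hlip.continuousOn.image_Icc_of_monotoneOn hab hmono]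
    exact hlip.image_ae_eq_image hST hS_ae
  have hzero : {s ∈ S | φ (x s) = 0} =ᵐ[volume] {s ∈ Icc a b | φ (x s) = 0} :=
    hS_ae.inter (ae_eq_refl {s | φ (x s) = 0})
  have := integral_inv_image_add_measureReal_eq hS
    (measure_ne_top_of_subset hST measure_Icc_lt_top.ne) hxS (hmono.mono hST)
  rw [setIntegral_congr_set himage, measureReal_congr hzero, measureReal_congr hS_ae,
    Real.volume_real_Icc_of_le hab] at this
  exact this.symm

theorem lipschitzOnWith_of_eq_add_integral {x g : ℝ → ℝ} {K : ℝ≥0} {a b c : ℝ}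
    (hg : ∀ s, ‖g s‖ ≤ K) (hint : IntervalIntegrable g volume a b)
    (hx : ∀ s ∈ Icc a b, x s = c + ∫ u in a..s, g u) : LipschitzOnWith K x (Icc a b) := by
  refine LipschitzOnWith.of_dist_le_mul fun u hu v hv => ?_
  have hint' : ∀ w ∈ Icc a b, IntervalIntegrable g volume a w := fun w hw =>
    hint.mono_set (uIcc_subset_uIcc_left (Icc_subset_uIcc hw))
  rw [Real.dist_eq, Real.dist_eq, hx u hu, hx v hv, add_sub_add_left_eq_sub,
    intervalIntegral.integral_interval_sub_left (hint' u hu) (hint' v hv), ← Real.norm_eq_abs]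
  exact intervalIntegral.norm_integral_le_of_norm_le_const fun s _ => hg s

theorem ae_hasDerivAt_of_eq_add_integral {x g : ℝ → ℝ} {a b c : ℝ}
    (hint : IntervalIntegrable g volume a b) (hx : ∀ s ∈ Icc a b, x s = c + ∫ u in a..s, g u) :
    ∀ᵐ s, s ∈ Icc a b → HasDerivAt x (g s) s := by
  filter_upwards [hint.ae_hasDerivAt_integral, (Ioo_ae_eq_Icc (a := a) (b := b)).mem_iff]
    with s hderiv hIoo hs
  have hs' := hIoo.2 hs
  refine ((hderiv (Icc_subset_uIcc hs) a left_mem_uIcc).const_add c).congr_of_eventuallyEq ?_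
  filter_upwards [Icc_mem_nhds hs'.1 hs'.2] with u hu using hx u hu

/-- Since `(f y)⁻¹ = 0` where `f y = 0`, the first integral only sees the set where `f ≠ 0`. -/
theorem time_decomposition_for_increasing_solution_general
    (f : ℝ → ℝ) (M : ℝ) (hb : ∀ y : ℝ, |f y| ≤ M)
    (τ : ℝ) (x₀ : ℝ) (x : ℝ → ℝ)
    (hmono : StrictMonoOn x (Set.Icc 0 τ))
    (hsol : ∀ t ∈ Set.Icc (0:ℝ) τ, x t = x₀ + ∫ s in (0:ℝ)..t, f (x s)) :
    ∀ t ∈ Set.Icc (0:ℝ) τ,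
      t = (∫ y in Set.Icc x₀ (x t), (f y)⁻¹)
          + (volume {s : ℝ | s ∈ Set.Icc 0 t ∧ f (x s) = 0}).toReal := by
  rintro t ⟨ht0, htτ⟩
  have hsub : Icc 0 t ⊆ Icc 0 τ := Icc_subset_Icc_right htτ
  have hx0 : x 0 = x₀ := by simpa using hsol 0 ⟨le_rfl, ht0.trans htτ⟩
  -- Where `f ∘ x` is not integrable the integral in `hsol` is `0`, which would make `x` constant.
  have hint : IntervalIntegrable (fun s => f (x s)) volume 0 t := by
    rcases ht0.eq_or_lt with rfl | htpos
    · exact IntervalIntegrable.refl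
    refine intervalIntegral.intervalIntegrable_of_integral_ne_zero fun h => ?_
    have := hmono ⟨le_rfl, ht0.trans htτ⟩ ⟨ht0, htτ⟩ htpos
    rw [hsol t ⟨ht0, htτ⟩, h, add_zero, ← hx0] at this
    exact this.false
  have hsol' : ∀ s ∈ Icc 0 t, x s = x₀ + ∫ u in (0:ℝ)..s, f (x u) := fun s hs => hsol s (hsub hs)
  have hlip : LipschitzOnWith M.toNNReal x (Icc 0 t) :=
    lipschitzOnWith_of_eq_add_integral (fun s => (hb _).trans M.le_coe_toNNReal) hint hsol'
  have := sub_eq_integral_inv_add_measureReal_of_lipschitzOnWith ht0 hlip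
    (hmono.monotoneOn.mono hsub) (ae_hasDerivAt_of_eq_add_integral hint hsol')
  rwa [sub_zero, hx0] at this

/-- For a strictly increasing Carathéodory solution of `ẋ = f(x)`, `x(0) = x₀`,
one has `t = ∫_{x₀}^{x(t)} 1/f(y) dy + Leb{s ∈ [0,t] : f(x(s)) = 0}`, where the
integral of `1/f` is over the set where `f ≠ 0` (note `(f y)⁻¹ = 0` where `f y = 0`). -/
theorem time_decomposition_for_increasing_solution
    (f : ℝ → ℝ) (M : ℝ) (hb : ∀ y : ℝ, |f y| ≤ M)
    (fl fr : ℝ → ℝ) (hreg : Regulated f fl fr) (hnj : NoJamming f fl fr)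
    (τ : ℝ) (hτ : 0 ≤ τ) (x₀ : ℝ) (x : ℝ → ℝ)
    (hmono : StrictMonoOn x (Set.Icc 0 τ))
    (hsol : ∀ t ∈ Set.Icc (0:ℝ) τ, x t = x₀ + ∫ s in (0:ℝ)..t, f (x s)) :
    ∀ t ∈ Set.Icc (0:ℝ) τ,
      t = (∫ y in Set.Icc x₀ (x t), (f y)⁻¹)
          + (volume {s : ℝ | s ∈ Set.Icc 0 t ∧ f (x s) = 0}).toReal :=
  time_decomposition_for_increasing_solution_general f M hb τ x₀ x hmono hsol
end

section
/- Let f : ℝ → ℝ and suppose there exist constants 0 < h ≤ M with h ≤ f(y) ≤ M for all y ∈ [x₀, x₁]. Let x : [0,τ] → ℝ be a Carathéodory solution of ẋ = f(x), x(0) = x₀ with x(t) ∈ [x₀, x₁] for all t ∈ [0,τ]. Then x is strictly increasing on [0,τ] and satisfies the solution formula ∫_{x₀}^{x(t)} 1/f(y) dy = t for all t ∈ [0,τ]. In particular the solution with values in [x₀,x₁] is unique. -/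
/-!
Because `f ∘ x` is bounded, the integral in the solution identity can only be a junk value where
`x` stays at `x₀`, i.e. beyond the supremum of the times up to which `f ∘ x` is integrable; there
`f ∘ x` is constant, so `f ∘ x` is integrable on all of `[0, τ]`. Then `x` is strictly increasing
and Lipschitz, with derivative `f (x u)` at almost every `u` by Lebesgue's differentiation theorem.
Lipschitz maps send null sets to null sets, so the substitution `y = x u` is valid and turns
`∫_{x₀}^{x t} 1/f` into `∫_0^t f (x u) / f (x u) du = t`. As `1/f > 0`, the primitive of `1/f` is
injective where it is nonzero, which gives uniqueness.
-/

open MeasureTheory Set Filter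

section Integrability

variable {E : Type*} [NormedAddCommGroup E]

theorem integrableOn_Ioc_of_forall_lt {g : ℝ → E} {a b C : ℝ}
    (hbound : ∀ t ∈ Ioo a b, ‖g t‖ ≤ C) (hg : ∀ t ∈ Ioo a b, IntegrableOn g (Ioc a t)) :
    IntegrableOn g (Ioc a b) := by
  rcases le_or_gt b a with hba | hab
  · rw [Ioc_eq_empty hba.not_gt]
    exact integrableOn_empty
  obtain ⟨u, -, hu, hlim⟩ := exists_seq_strictMono_tendsto' hab
  have hC : 0 ≤ C := (norm_nonneg _).trans (hbound _ (hu 0))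
  refine integrableOn_Ioc_of_intervalIntegral_norm_bounded (a := fun _ => a) (I := C * (b - a))
    (fun n => hg _ (hu n)) tendsto_const_nhds hlim (Eventually.of_forall fun n => ?_)
  calc ∫ s in Ioc a (u n), ‖g s‖
      ≤ C * volume.real (Ioc a (u n)) :=
        (Real.le_norm_self _).trans <| norm_setIntegral_le_of_norm_le_const measure_Ioc_lt_top
          fun s hs => by simpa using hbound s ⟨hs.1, hs.2.trans_lt (hu n).2⟩
    _ ≤ C * (b - a) := by
        rw [Real.volume_real_Ioc_of_le (hu n).1.le]
        exact mul_le_mul_of_nonneg_left (by linarith [(hu n).2]) hC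

theorem integrableOn_Ioc_of_eq_of_not_integrableOn {g : ℝ → E} {a b C : ℝ} {c : E}
    (hbound : ∀ t ∈ Ioc a b, ‖g t‖ ≤ C)
    (hconst : ∀ t ∈ Ioc a b, ¬IntegrableOn g (Ioc a t) → g t = c) :
    IntegrableOn g (Ioc a b) := by
  rcases le_or_gt b a with hba | hab
  · rw [Ioc_eq_empty hba.not_gt]
    exact integrableOn_empty
  set S := {t ∈ Icc a b | IntegrableOn g (Ioc a t)}
  have haS : a ∈ S := ⟨left_mem_Icc.2 hab.le, by simp⟩
  have hSbdd : BddAbove S := ⟨b, fun t ht => ht.1.2⟩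
  have ha_sup : a ≤ sSup S := le_csSup hSbdd haS
  have hsup_b : sSup S ≤ b := csSup_le ⟨a, haS⟩ fun t ht => ht.1.2
  have below : IntegrableOn g (Ioc a (sSup S)) := by
    refine integrableOn_Ioc_of_forall_lt (fun t ht => hbound t ⟨ht.1, ht.2.le.trans hsup_b⟩)
      fun t ht => ?_
    obtain ⟨s, hs, hts⟩ := exists_lt_of_lt_csSup ⟨a, haS⟩ ht.2
    exact hs.2.mono_set (Ioc_subset_Ioc_right hts.le)
  have above : IntegrableOn g (Ioc (sSup S) b) := by
    refine (integrableOn_const measure_Ioc_lt_top.ne (C := c)).congr_fun (fun t ht => ?_)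
      measurableSet_Ioc
    refine (hconst t ⟨ha_sup.trans_lt ht.1, ht.2⟩ fun hint => ?_).symm
    exact (le_csSup hSbdd ⟨⟨(ha_sup.trans_lt ht.1).le, ht.2⟩, hint⟩).not_gt ht.1
  rw [← Ioc_union_Ioc_eq_Ioc ha_sup hsup_b]
  exact below.union above

end Integrability

theorem LipschitzOnWith.volume_image_null {φ : ℝ → ℝ} {K : NNReal} {s : Set ℝ}
    (hφ : LipschitzOnWith K φ s) (hs : volume s = 0) : volume (φ '' s) = 0 := by
  have := hφ.hausdorffMeasure_image_le zero_le_one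
  rw [hausdorffMeasure_real, hs, mul_zero] at this
  exact nonpos_iff_eq_zero.1 this

theorem intervalIntegral_comp_smul_deriv_of_lipschitzOnWith {E : Type*} [NormedAddCommGroup E]
    [NormedSpace ℝ E] {φ φ' : ℝ → ℝ} {a b : ℝ} {K : NNReal} (hab : a ≤ b)
    (hφ : LipschitzOnWith K φ (Icc a b)) (hmono : MonotoneOn φ (Icc a b))
    (hderiv : ∀ᵐ u, u ∈ Ioo a b → HasDerivAt φ (φ' u) u) (g : ℝ → E) :
    ∫ u in a..b, φ' u • g (φ u) = ∫ y in φ a..φ b, g y := by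
  obtain ⟨N, hbad, hN, hN0⟩ := exists_measurable_superset_of_null (ae_iff.1 hderiv)
  set s := Ioo a b \ N
  have hs : MeasurableSet s := measurableSet_Ioo.diff hN
  have hs_sub : s ⊆ Icc a b := sdiff_subset.trans Ioo_subset_Icc_self
  have hderiv_s : ∀ u ∈ s, HasDerivWithinAt φ (φ' u) s u := by
    rintro u ⟨hu, huN⟩
    have : u ∈ Ioo a b → HasDerivAt φ (φ' u) u := of_not_not fun h => huN (hbad h)
    exact (this hu).hasDerivWithinAt
  have hs_ae : s =ᵐ[volume] Ioc a b := (sdiff_null_ae_eq_self hN0).trans Ioo_ae_eq_Ioc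
  have himage_ae : φ '' s =ᵐ[volume] Ioc (φ a) (φ b) := by
    refine (ae_eq_set.2 ⟨?_, ?_⟩).trans Ioc_ae_eq_Icc.symm
    · rw [sdiff_eq_empty.2 ((image_mono hs_sub).trans (hmono.image_Icc_subset))]
      exact measure_empty
    · refine measure_mono_null ?_ ((hφ.mono sdiff_subset).volume_image_null (s := Icc a b \ s) ?_)
      · intro y hy
        obtain ⟨u, hu, rfl⟩ := intermediate_value_Icc hab hφ.continuousOn hy.1
        exact ⟨u, ⟨hu, fun hus => hy.2 ⟨u, hus, rfl⟩⟩, rfl⟩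
      · exact (ae_eq_set.1 (hs_ae.trans Ioc_ae_eq_Icc)).2
  have hφab : φ a ≤ φ b := hmono (left_mem_Icc.2 hab) (right_mem_Icc.2 hab) hab
  rw [intervalIntegral.integral_of_le hab, intervalIntegral.integral_of_le hφab,
    ← setIntegral_congr_set hs_ae, ← setIntegral_congr_set himage_ae,
    integral_image_eq_integral_deriv_smul_of_monotoneOn hs hderiv_s (hmono.mono hs_sub)]

def IsCaratheodorySolution (f : ℝ → ℝ) (x₀ τ : ℝ) (x : ℝ → ℝ) : Prop :=
  ∀ t ∈ Icc 0 τ, x t = x₀ + ∫ s in 0..t, f (x s)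

namespace IsCaratheodorySolution

variable {f x : ℝ → ℝ} {x₀ τ C : ℝ}

theorem apply_zero (hx : IsCaratheodorySolution f x₀ τ x) (hτ : 0 ≤ τ) : x 0 = x₀ := by
  simp [hx 0 ⟨le_rfl, hτ⟩]

theorem intervalIntegrable (hx : IsCaratheodorySolution f x₀ τ x) (hτ : 0 ≤ τ)
    (hbound : ∀ t ∈ Icc 0 τ, ‖f (x t)‖ ≤ C) :
    IntervalIntegrable (fun s => f (x s)) volume 0 τ := by
  rw [intervalIntegrable_iff_integrableOn_Ioc_of_le hτ]
  refine integrableOn_Ioc_of_eq_of_not_integrableOn (c := f x₀)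
    (fun t ht => hbound t (Ioc_subset_Icc_self ht)) fun t ht hnot => ?_
  rw [← intervalIntegrable_iff_integrableOn_Ioc_of_le ht.1.le] at hnot
  rw [hx t (Ioc_subset_Icc_self ht), intervalIntegral.integral_undef hnot, add_zero]

theorem sub_eq_integral (hx : IsCaratheodorySolution f x₀ τ x)
    (hint : IntervalIntegrable (fun s => f (x s)) volume 0 τ) {a b : ℝ}
    (ha : a ∈ Icc 0 τ) (hb : b ∈ Icc 0 τ) :
    x b - x a = ∫ s in a..b, f (x s) := by
  have hint' {c : ℝ} (hc : c ∈ Icc 0 τ) : IntervalIntegrable (fun s => f (x s)) volume 0 c :=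
    hint.mono_set (uIcc_subset_uIcc left_mem_uIcc (Icc_subset_uIcc hc))
  rw [hx b hb, hx a ha, add_sub_add_left_eq_sub,
    intervalIntegral.integral_interval_sub_left (hint' hb) (hint' ha)]

theorem strictMonoOn (hx : IsCaratheodorySolution f x₀ τ x)
    (hint : IntervalIntegrable (fun s => f (x s)) volume 0 τ)
    (hpos : ∀ t ∈ Icc 0 τ, 0 < f (x t)) : StrictMonoOn x (Icc 0 τ) := by
  intro a ha b hb hab
  rw [← sub_pos, hx.sub_eq_integral hint ha hb]
  refine intervalIntegral.intervalIntegral_pos_of_pos_on ?_ (fun u hu => ?_) hab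
  · exact hint.mono_set (uIcc_subset_uIcc (Icc_subset_uIcc ha) (Icc_subset_uIcc hb))
  · exact hpos u ⟨ha.1.trans hu.1.le, hu.2.le.trans hb.2⟩

theorem lipschitzOnWith (hx : IsCaratheodorySolution f x₀ τ x)
    (hbound : ∀ t ∈ Icc 0 τ, ‖f (x t)‖ ≤ C) :
    LipschitzOnWith (Real.toNNReal C) x (Icc 0 τ) := by
  refine LipschitzOnWith.of_dist_le' fun b hb a ha => ?_
  have hint := hx.intervalIntegrable (hb.1.trans hb.2) hbound
  rw [dist_eq_norm, Real.dist_eq, hx.sub_eq_integral hint ha hb]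
  refine intervalIntegral.norm_integral_le_of_norm_le_const fun u hu => hbound u ?_
  exact uIcc_subset_Icc ha hb (uIoc_subset_uIcc hu)

theorem ae_hasDerivAt (hx : IsCaratheodorySolution f x₀ τ x)
    (hint : IntervalIntegrable (fun s => f (x s)) volume 0 τ) :
    ∀ᵐ u, u ∈ Ioo 0 τ → HasDerivAt x (f (x u)) u := by
  filter_upwards [hint.ae_hasDerivAt_integral] with u hu hmem
  have hderiv := (hu (Icc_subset_uIcc (Ioo_subset_Icc_self hmem)) 0 left_mem_uIcc).const_add x₀
  refine hderiv.congr_of_eventuallyEq ?_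
  filter_upwards [Ioo_mem_nhds hmem.1 hmem.2] with v hv using hx v (Ioo_subset_Icc_self hv)

theorem integral_inv_comp_eq (hx : IsCaratheodorySolution f x₀ τ x)
    (hpos : ∀ t ∈ Icc 0 τ, 0 < f (x t)) (hbound : ∀ t ∈ Icc 0 τ, ‖f (x t)‖ ≤ C)
    {t : ℝ} (ht : t ∈ Icc 0 τ) :
    ∫ y in x₀..x t, (f y)⁻¹ = t := by
  have hτ : 0 ≤ τ := ht.1.trans ht.2
  have hint := hx.intervalIntegrable hτ hbound
  have hsub : Icc 0 t ⊆ Icc 0 τ := Icc_subset_Icc_right ht.2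
  have hderiv : ∀ᵐ u, u ∈ Ioo 0 t → HasDerivAt x (f (x u)) u :=
    (hx.ae_hasDerivAt hint).mono fun u hu hmem => hu (Ioo_subset_Ioo_right ht.2 hmem)
  calc ∫ y in x₀..x t, (f y)⁻¹
      = ∫ u in 0..t, f (x u) • (f (x u))⁻¹ := by
        rw [intervalIntegral_comp_smul_deriv_of_lipschitzOnWith ht.1
          ((hx.lipschitzOnWith hbound).mono hsub)
          ((hx.strictMonoOn hint hpos).monotoneOn.mono hsub) hderiv (fun y => (f y)⁻¹),
          hx.apply_zero hτ]
    _ = ∫ _ in 0..t, (1 : ℝ) := intervalIntegral.integral_congr fun u hu =>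
        mul_inv_cancel₀ (hpos u (hsub (uIcc_of_le ht.1 ▸ hu))).ne'
    _ = t := by simp

end IsCaratheodorySolution

theorem intervalIntegral_lt_of_pos {g : ℝ → ℝ} {a p q : ℝ}
    (hint : IntervalIntegrable g volume a q) (hap : a ≤ p) (hpq : p < q)
    (hpos : ∀ y ∈ Ioo p q, 0 < g y) : ∫ y in a..p, g y < ∫ y in a..q, g y := by
  have hint_pq : IntervalIntegrable g volume p q :=
    hint.mono_set (uIcc_subset_uIcc_right (Icc_subset_uIcc ⟨hap, hpq.le⟩))
  rw [← intervalIntegral.integral_add_adjacent_intervals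
    (hint.mono_set (uIcc_subset_uIcc_left (Icc_subset_uIcc ⟨hap, hpq.le⟩))) hint_pq,
    lt_add_iff_pos_right]
  exact intervalIntegral.intervalIntegral_pos_of_pos_on hint_pq hpos hpq

theorem eq_of_intervalIntegral_eq {g : ℝ → ℝ} {a c p q : ℝ} (hpos : ∀ y ∈ Ioo a c, 0 < g y)
    (hp : p ∈ Icc a c) (hq : q ∈ Icc a c) (heq : ∫ y in a..p, g y = ∫ y in a..q, g y)
    (hne : ∫ y in a..p, g y ≠ 0) : p = q := by
  have hpos' {p q : ℝ} (hp : p ∈ Icc a c) (hq : q ∈ Icc a c) : ∀ y ∈ Ioo p q, 0 < g y :=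
    fun y hy => hpos y ⟨hp.1.trans_lt hy.1, hy.2.trans_le hq.2⟩
  rcases lt_trichotomy p q with hpq | rfl | hqp
  · have hint := intervalIntegral.intervalIntegrable_of_integral_ne_zero (heq ▸ hne)
    exact absurd heq (intervalIntegral_lt_of_pos hint hp.1 hpq (hpos' hp hq)).ne
  · rfl
  · have hint := intervalIntegral.intervalIntegrable_of_integral_ne_zero hne
    exact absurd heq (intervalIntegral_lt_of_pos hint hq.1 hqp (hpos' hq hp)).ne'

theorem solution_formula_and_uniqueness_general
    (f : ℝ → ℝ) (x₀ x₁ h M : ℝ) (hh : 0 < h)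
    (hf : ∀ y ∈ Set.Icc x₀ x₁, h ≤ f y ∧ f y ≤ M)
    (τ : ℝ) (hτ : 0 ≤ τ) (x : ℝ → ℝ)
    (hrange : ∀ t ∈ Set.Icc (0:ℝ) τ, x t ∈ Set.Icc x₀ x₁)
    (hsol : ∀ t ∈ Set.Icc (0:ℝ) τ, x t = x₀ + ∫ s in (0:ℝ)..t, f (x s)) :
    StrictMonoOn x (Set.Icc 0 τ) ∧
    (∀ t ∈ Set.Icc (0:ℝ) τ, (∫ y in x₀..(x t), (f y)⁻¹) = t) ∧
    (∀ x' : ℝ → ℝ,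
      (∀ t ∈ Set.Icc (0:ℝ) τ, x' t ∈ Set.Icc x₀ x₁) →
      (∀ t ∈ Set.Icc (0:ℝ) τ, x' t = x₀ + ∫ s in (0:ℝ)..t, f (x' s)) →
      ∀ t ∈ Set.Icc (0:ℝ) τ, x' t = x t) := by
  have hpos : ∀ y ∈ Icc x₀ x₁, 0 < f y := fun y hy => hh.trans_le (hf y hy).1
  have hbound : ∀ y ∈ Icc x₀ x₁, ‖f y‖ ≤ M := fun y hy => by
    rw [Real.norm_of_nonneg (hpos y hy).le]
    exact (hf y hy).2
  have formula (y : ℝ → ℝ) (hy : ∀ t ∈ Icc 0 τ, y t ∈ Icc x₀ x₁)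
      (hy_sol : IsCaratheodorySolution f x₀ τ y) (t : ℝ) (ht : t ∈ Icc 0 τ) :
      ∫ z in x₀..y t, (f z)⁻¹ = t :=
    hy_sol.integral_inv_comp_eq (fun s hs => hpos _ (hy s hs)) (fun s hs => hbound _ (hy s hs)) ht
  have hsol : IsCaratheodorySolution f x₀ τ x := hsol
  refine ⟨hsol.strictMonoOn (hsol.intervalIntegrable hτ fun s hs => hbound _ (hrange s hs))
    fun s hs => hpos _ (hrange s hs), formula x hrange hsol, fun x' hrange' hsol' t ht => ?_⟩
  rcases eq_or_ne t 0 with rfl | ht0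
  · rw [hsol.apply_zero hτ, IsCaratheodorySolution.apply_zero hsol' hτ]
  refine eq_of_intervalIntegral_eq (fun y hy => inv_pos.2 (hpos y (Ioo_subset_Icc_self hy)))
    (hrange' t ht) (hrange t ht) ?_ ?_
  · rw [formula x' hrange' hsol' t ht, formula x hrange hsol t ht]
  · rwa [formula x' hrange' hsol' t ht]

/-- If `0 < h ≤ f ≤ M` on `[x₀, x₁]`, then any Carathéodory solution of
`ẋ = f(x)`, `x(0) = x₀` taking values in `[x₀, x₁]` is strictly increasing,
satisfies the solution formula `∫_{x₀}^{x(t)} 1/f(y) dy = t`, and is unique. -/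
theorem solution_formula_and_uniqueness
    (f : ℝ → ℝ) (x₀ x₁ h M : ℝ) (hh : 0 < h) (hM : h ≤ M)
    (hf : ∀ y ∈ Set.Icc x₀ x₁, h ≤ f y ∧ f y ≤ M)
    (τ : ℝ) (hτ : 0 ≤ τ) (x : ℝ → ℝ)
    (hrange : ∀ t ∈ Set.Icc (0:ℝ) τ, x t ∈ Set.Icc x₀ x₁)
    (hsol : ∀ t ∈ Set.Icc (0:ℝ) τ, x t = x₀ + ∫ s in (0:ℝ)..t, f (x s)) :
    StrictMonoOn x (Set.Icc 0 τ) ∧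
    (∀ t ∈ Set.Icc (0:ℝ) τ, (∫ y in x₀..(x t), (f y)⁻¹) = t) ∧
    (∀ x' : ℝ → ℝ,
      (∀ t ∈ Set.Icc (0:ℝ) τ, x' t ∈ Set.Icc x₀ x₁) →
      (∀ t ∈ Set.Icc (0:ℝ) τ, x' t = x₀ + ∫ s in (0:ℝ)..t, f (x' s)) →
      ∀ t ∈ Set.Icc (0:ℝ) τ, x' t = x t) :=
  solution_formula_and_uniqueness_general f x₀ x₁ h M hh hf τ hτ x hrange hsol
end
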